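/- (Proposition 3.1, functional form for extremal odd unimodular lattices.) Let n be an integer with 9 ≤ n ≤ 31, and define Θ(y) = θ₃(y)^n − 2n · θ₃(y)^{n−8} · Δ₈(y) for y > 0. Then Θ(y) > 0 for all y > 0, the ratio θ₃(y)^n / Θ(y) satisfies θ₃(y)^n / Θ(y) ≤ 32/(32 − n) for all y > 0, and equality holds at y = 1. In particular, taking n = 12, 14, 15, 23 gives the secrecy gains 8/5, 16/9, 32/17, 32/9 of the extremal odd unimodular lattices D₁₂⁺, (E₇²)⁺, A₁₅⁺, O₂₃, each achieved at τ = i. -/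
import Mathlib


open Real

/-- θ₂ on the imaginary axis: θ₂(y) = ∑_{n ∈ ℤ} e^{-π y (n + 1/2)²}. -/
noncomputable def theta2 (y : ℝ) : ℝ := ∑' n : ℤ, Real.exp (-π * y * ((n : ℝ) + 1/2)^2)

/-- θ₃ on the imaginary axis: θ₃(y) = ∑_{n ∈ ℤ} e^{-π y n²}. -/
noncomputable def theta3 (y : ℝ) : ℝ := ∑' n : ℤ, Real.exp (-π * y * (n : ℝ)^2)

/-- θ₄ on the imaginary axis: θ₄(y) = ∑_{n ∈ ℤ} (-1)^n e^{-π y n²}. -/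
noncomputable def theta4 (y : ℝ) : ℝ := ∑' n : ℤ, (-1 : ℝ) ^ n * Real.exp (-π * y * (n : ℝ)^2)

/-- Δ₈ on the imaginary axis: Δ₈(y) = (1/16) θ₂(y)⁴ θ₄(y)⁴. -/
noncomputable def Delta8 (y : ℝ) : ℝ := (1/16 : ℝ) * theta2 y ^ 4 * theta4 y ^ 4

/-! ### Summability lemmas -/

lemma summable_theta_aux {y : ℝ} (hy : 0 < y) (c : ℝ) :
    Summable fun n : ℤ => rexp (-π * y * ((n : ℝ) + c) ^ 2) := by
  have hb := summable_pow_mul_jacobiTheta₂_term_bound (y * |c|) hy 0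
  simp only [pow_zero, one_mul] at hb
  refine hb.of_nonneg_of_le (fun n => (exp_pos _).le) (fun n => ?_)
  rw [exp_le_exp]
  have hcast : ((|n| : ℤ) : ℝ) = |(n : ℝ)| := by push_cast; ring
  rw [hcast]
  have h1 : -(|c| * |(n:ℝ)|) ≤ c * n := by
    have := neg_abs_le (c * (n:ℝ)); rw [abs_mul] at this; linarith
  have h0 : 0 ≤ 2*(c*n) + c^2 + 2*(|c| * |(n:ℝ)|) := by nlinarith [sq_nonneg c]
  nlinarith [mul_nonneg (mul_nonneg pi_pos.le hy.le) h0]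

lemma summable3 {y : ℝ} (hy : 0 < y) : Summable fun n : ℤ => rexp (-π * y * (n : ℝ) ^ 2) := by
  simpa using summable_theta_aux hy 0

lemma summable2 {y : ℝ} (hy : 0 < y) :
    Summable fun n : ℤ => rexp (-π * y * ((n : ℝ) + 1/2) ^ 2) := summable_theta_aux hy (1/2)

lemma abs_summable {f : ℤ → ℝ} (h : Summable f) (h0 : ∀ n, 0 ≤ f n) :
    Summable fun n => ‖f n‖ := by
  refine h.congr fun n => ?_
  rw [Real.norm_eq_abs, abs_of_nonneg (h0 n)]

/-! ### Positivity of θ₂ and θ₃ -/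

lemma theta3_pos {y : ℝ} (hy : 0 < y) : 0 < theta3 y :=
  Summable.tsum_pos (summable3 hy) (fun _ => (exp_pos _).le) 0 (exp_pos _)

lemma theta2_pos {y : ℝ} (hy : 0 < y) : 0 < theta2 y :=
  Summable.tsum_pos (summable2 hy) (fun _ => (exp_pos _).le) 0 (exp_pos _)

/-! ### The functional equation relating θ₄ and θ₂ -/

open Complex in
lemma theta4_eq {y : ℝ} (hy : 0 < y) : theta4 y = theta2 (1/y) / Real.sqrt y := by
  have hre : 0 < ((y : ℂ)).re := by simpa using hy
  have key := Complex.tsum_exp_neg_quadratic hre (Complex.I / 2)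
  -- LHS is theta4 y
  have hL : (∑' n : ℤ, cexp (-Real.pi * y * (n:ℂ) ^ 2 + 2 * Real.pi * (Complex.I / 2) * n))
      = (theta4 y : ℂ) := by
    rw [theta4, Complex.ofReal_tsum]
    refine tsum_congr fun n => ?_
    have h1 : cexp (2 * Real.pi * (Complex.I / 2) * n) = (-1 : ℂ) ^ n := by
      have : (2 * (Real.pi:ℂ) * (Complex.I / 2) * n) = n * (Real.pi * Complex.I) := by ring
      rw [this, Complex.exp_int_mul, Complex.exp_pi_mul_I]
    rw [Complex.exp_add, h1]
    push_cast
    ring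
  -- RHS sum is theta2 (1/y)
  have hR : (∑' n : ℤ, cexp (-Real.pi / y * ((n:ℂ) + Complex.I * (Complex.I / 2)) ^ 2))
      = (theta2 (1/y) : ℂ) := by
    rw [theta2, Complex.ofReal_tsum]
    rw [← (Equiv.neg ℤ).tsum_eq fun n : ℤ =>
      cexp (-Real.pi / y * ((n:ℂ) + Complex.I * (Complex.I / 2)) ^ 2)]
    refine tsum_congr fun n => ?_
    rw [Complex.ofReal_exp]
    congr 1
    have hI : Complex.I * (Complex.I / 2) = -(1/2 : ℂ) := by
      rw [show Complex.I * (Complex.I / 2) = Complex.I ^ 2 / 2 by ring, Complex.I_sq]; norm_num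
    simp only [Equiv.neg_apply, Int.cast_neg, hI]
    push_cast
    ring
  -- the square root
  have hsqrt : ((y : ℂ)) ^ (1/2 : ℂ) = (Real.sqrt y : ℂ) := by
    rw [Real.sqrt_eq_rpow, Complex.ofReal_cpow hy.le]
    norm_num
  rw [hL, hR, hsqrt] at key
  have : (theta4 y : ℂ) = ((theta2 (1/y) / Real.sqrt y : ℝ) : ℂ) := by
    rw [key]; push_cast; ring
  exact_mod_cast this

lemma theta4_pos {y : ℝ} (hy : 0 < y) : 0 < theta4 y := by
  rw [theta4_eq hy]
  exact div_pos (theta2_pos (by positivity)) (Real.sqrt_pos.mpr hy)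

/-! ### Splitting a sum over ℤ × ℤ according to the parity of the coordinate sum -/

def phiE (p : ℤ × ℤ) : ℤ × ℤ := (p.1 + p.2, p.1 - p.2)
def phiO (p : ℤ × ℤ) : ℤ × ℤ := (p.1 + p.2 + 1, p.1 - p.2)

lemma tsum_split (F : ℤ × ℤ → ℝ) (hF : Summable F) :
    ∑' p, F p = (∑' p, F (phiE p)) + ∑' p, F (phiO p) := by
  set s : Set (ℤ × ℤ) := {p | (p.1 + p.2) % 2 = 0} with hs
  have hinjE : Function.Injective phiE := by
    intro p q h
    simp only [phiE, Prod.ext_iff] at h ⊢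
    omega
  have hinjO : Function.Injective phiO := by
    intro p q h
    simp only [phiO, Prod.ext_iff] at h ⊢
    omega
  have hrangeE : Set.range phiE = s := by
    ext ⟨m, k⟩
    simp only [Set.mem_range, hs, Set.mem_setOf_eq, phiE, Prod.ext_iff, Prod.exists]
    constructor
    · rintro ⟨a, b, h1, h2⟩; omega
    · intro h; exact ⟨(m + k) / 2, (m - k) / 2, by omega, by omega⟩
  have hrangeO : Set.range phiO = sᶜ := by
    ext ⟨m, k⟩
    simp only [Set.mem_range, Set.mem_compl_iff, hs, Set.mem_setOf_eq, phiO, Prod.ext_iff,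
      Prod.exists]
    constructor
    · rintro ⟨a, b, h1, h2⟩; omega
    · intro h; exact ⟨(m + k - 1) / 2, (m - k - 1) / 2, by omega, by omega⟩
  have h1 : ∑' p, (s.indicator F) p = ∑' p, F (phiE p) := by
    rw [← hinjE.tsum_eq (by rw [hrangeE]; exact Set.support_indicator_subset)]
    refine tsum_congr fun p => Set.indicator_of_mem ?_ F
    have : phiE p ∈ Set.range phiE := Set.mem_range_self p
    rwa [hrangeE] at this
  have h2 : ∑' p, (sᶜ.indicator F) p = ∑' p, F (phiO p) := by
    rw [← hinjO.tsum_eq (by rw [hrangeO]; exact Set.support_indicator_subset)]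
    refine tsum_congr fun p => Set.indicator_of_mem ?_ F
    have : phiO p ∈ Set.range phiO := Set.mem_range_self p
    rwa [hrangeO] at this
  rw [← h1, ← h2, ← Summable.tsum_add (hF.indicator s) (hF.indicator sᶜ)]
  refine tsum_congr fun p => ?_
  rw [← Set.indicator_self_add_compl_apply s F p]

/-! ### Doubling (Landen-type) identities -/

lemma theta3_dbl {y : ℝ} (hy : 0 < y) :
    theta3 y ^ 2 = theta3 (2*y) ^ 2 + theta2 (2*y) ^ 2 := by
  have h2y : 0 < 2*y := by linarith
  have s3 := summable3 hy
  have n3 := abs_summable s3 fun n => (exp_pos _).le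
  have n3' := abs_summable (summable3 h2y) fun n => (exp_pos _).le
  have n2' := abs_summable (summable2 h2y) fun n => (exp_pos _).le
  have hprod : Summable fun z : ℤ × ℤ =>
      rexp (-π * y * (z.1 : ℝ) ^ 2) * rexp (-π * y * (z.2 : ℝ) ^ 2) :=
    (n3.mul_norm n3).of_norm
  calc theta3 y ^ 2
      = ∑' z : ℤ × ℤ, rexp (-π * y * (z.1 : ℝ) ^ 2) * rexp (-π * y * (z.2 : ℝ) ^ 2) := by
        rw [sq, theta3]; exact tsum_mul_tsum_of_summable_norm n3 n3
    _ = (∑' p : ℤ × ℤ, rexp (-π * (2*y) * (p.1 : ℝ) ^ 2) * rexp (-π * (2*y) * (p.2 : ℝ) ^ 2))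
        + ∑' p : ℤ × ℤ,
            rexp (-π * (2*y) * ((p.1 : ℝ) + 1/2) ^ 2) * rexp (-π * (2*y) * ((p.2 : ℝ) + 1/2) ^ 2) := by
        rw [tsum_split _ hprod]
        congr 1
        · refine tsum_congr fun p => ?_
          simp only [phiE]
          rw [← Real.exp_add, ← Real.exp_add]
          congr 1
          push_cast
          ring
        · refine tsum_congr fun p => ?_
          simp only [phiO]
          rw [← Real.exp_add, ← Real.exp_add]
          congr 1
          push_cast
          ring
    _ = theta3 (2*y) ^ 2 + theta2 (2*y) ^ 2 := by
        rw [sq, sq, theta3, theta2]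
        rw [tsum_mul_tsum_of_summable_norm n3' n3', tsum_mul_tsum_of_summable_norm n2' n2']

lemma theta2_dbl {y : ℝ} (hy : 0 < y) :
    theta2 y ^ 2 = 2 * theta2 (2*y) * theta3 (2*y) := by
  have h2y : 0 < 2*y := by linarith
  have n2 := abs_summable (summable2 hy) fun n => (exp_pos _).le
  have n3' := abs_summable (summable3 h2y) fun n => (exp_pos _).le
  have n2' := abs_summable (summable2 h2y) fun n => (exp_pos _).le
  have s1 : Summable fun a : ℤ => rexp (-π * (2*y) * ((a : ℝ) + 1) ^ 2) :=
    summable_theta_aux h2y 1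
  have n1 := abs_summable s1 fun n => (exp_pos _).le
  have hshift : ∑' a : ℤ, rexp (-π * (2*y) * ((a : ℝ) + 1) ^ 2) = theta3 (2*y) := by
    rw [theta3, ← (Equiv.addRight (1:ℤ)).tsum_eq (fun n : ℤ => rexp (-π * (2*y) * (n : ℝ) ^ 2))]
    refine tsum_congr fun n => ?_
    congr 1
    push_cast [Equiv.coe_addRight]
    ring
  have hprod : Summable fun z : ℤ × ℤ =>
      rexp (-π * y * ((z.1 : ℝ) + 1/2) ^ 2) * rexp (-π * y * ((z.2 : ℝ) + 1/2) ^ 2) :=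
    (n2.mul_norm n2).of_norm
  calc theta2 y ^ 2
      = ∑' z : ℤ × ℤ, rexp (-π * y * ((z.1 : ℝ) + 1/2) ^ 2) * rexp (-π * y * ((z.2 : ℝ) + 1/2) ^ 2) := by
        rw [sq, theta2]; exact tsum_mul_tsum_of_summable_norm n2 n2
    _ = (∑' p : ℤ × ℤ, rexp (-π * (2*y) * ((p.1 : ℝ) + 1/2) ^ 2) * rexp (-π * (2*y) * (p.2 : ℝ) ^ 2))
        + ∑' p : ℤ × ℤ,
            rexp (-π * (2*y) * ((p.1 : ℝ) + 1) ^ 2) * rexp (-π * (2*y) * ((p.2 : ℝ) + 1/2) ^ 2) := by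
        rw [tsum_split _ hprod]
        congr 1
        · refine tsum_congr fun p => ?_
          simp only [phiE]
          rw [← Real.exp_add, ← Real.exp_add]
          congr 1
          push_cast
          ring
        · refine tsum_congr fun p => ?_
          simp only [phiO]
          rw [← Real.exp_add, ← Real.exp_add]
          congr 1
          push_cast
          ring
    _ = theta2 (2*y) * theta3 (2*y) + theta3 (2*y) * theta2 (2*y) := by
        rw [← tsum_mul_tsum_of_summable_norm n2' n3', ← tsum_mul_tsum_of_summable_norm n1 n2',
          hshift, theta2, theta3]
    _ = 2 * theta2 (2*y) * theta3 (2*y) := by ring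

lemma theta4_dbl {y : ℝ} (hy : 0 < y) :
    theta4 y ^ 2 = theta3 (2*y) ^ 2 - theta2 (2*y) ^ 2 := by
  have h2y : 0 < 2*y := by linarith
  have n4 : Summable fun n : ℤ => ‖(-1:ℝ) ^ n * rexp (-π * y * (n : ℝ) ^ 2)‖ := by
    refine (summable3 hy).congr fun n => ?_
    rw [norm_mul, norm_zpow, norm_neg, norm_one, one_zpow, one_mul, Real.norm_eq_abs, abs_exp]
  have n3' := abs_summable (summable3 h2y) fun n => (exp_pos _).le
  have n2' := abs_summable (summable2 h2y) fun n => (exp_pos _).le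
  have hprod : Summable fun z : ℤ × ℤ =>
      ((-1:ℝ) ^ z.1 * rexp (-π * y * (z.1 : ℝ) ^ 2)) *
        ((-1:ℝ) ^ z.2 * rexp (-π * y * (z.2 : ℝ) ^ 2)) :=
    (n4.mul_norm n4).of_norm
  have hne : (-1:ℝ) ≠ 0 := by norm_num
  calc theta4 y ^ 2
      = ∑' z : ℤ × ℤ, ((-1:ℝ) ^ z.1 * rexp (-π * y * (z.1 : ℝ) ^ 2)) *
          ((-1:ℝ) ^ z.2 * rexp (-π * y * (z.2 : ℝ) ^ 2)) := by
        rw [sq, theta4]; exact tsum_mul_tsum_of_summable_norm n4 n4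
    _ = (∑' p : ℤ × ℤ, rexp (-π * (2*y) * (p.1 : ℝ) ^ 2) * rexp (-π * (2*y) * (p.2 : ℝ) ^ 2))
        + ∑' p : ℤ × ℤ,
            -(rexp (-π * (2*y) * ((p.1 : ℝ) + 1/2) ^ 2) *
              rexp (-π * (2*y) * ((p.2 : ℝ) + 1/2) ^ 2)) := by
        rw [tsum_split _ hprod]
        congr 1
        · refine tsum_congr fun p => ?_
          simp only [phiE]
          have hs : (-1:ℝ) ^ (p.1 + p.2) * (-1:ℝ) ^ (p.1 - p.2) = 1 := by
            rw [← zpow_add₀ hne]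
            rw [show p.1 + p.2 + (p.1 - p.2) = 2 * p.1 by ring, zpow_mul]
            norm_num
          rw [mul_mul_mul_comm, hs, one_mul, ← Real.exp_add, ← Real.exp_add]
          congr 1
          push_cast
          ring
        · refine tsum_congr fun p => ?_
          simp only [phiO]
          have hs : (-1:ℝ) ^ (p.1 + p.2 + 1) * (-1:ℝ) ^ (p.1 - p.2) = -1 := by
            rw [← zpow_add₀ hne]
            rw [show p.1 + p.2 + 1 + (p.1 - p.2) = 2 * p.1 + 1 by ring, zpow_add₀ hne, zpow_mul]
            norm_num
          rw [mul_mul_mul_comm, hs, neg_one_mul, ← Real.exp_add, ← Real.exp_add, neg_inj]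
          congr 1
          push_cast
          ring
    _ = theta3 (2*y) ^ 2 - theta2 (2*y) ^ 2 := by
        rw [tsum_neg, ← tsum_mul_tsum_of_summable_norm n3' n3',
          ← tsum_mul_tsum_of_summable_norm n2' n2', theta2, theta3]
        ring

/-! ### The Jacobi identity and the key bound on Δ₈ -/

lemma jacobi_identity {y : ℝ} (hy : 0 < y) :
    theta2 y ^ 4 + theta4 y ^ 4 = theta3 y ^ 4 := by
  have h2 := theta2_dbl hy
  have h3 := theta3_dbl hy
  have h4 := theta4_dbl hy
  have e2 : theta2 y ^ 4 = (2 * theta2 (2*y) * theta3 (2*y)) ^ 2 := by rw [← h2]; ring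
  have e3 : theta3 y ^ 4 = (theta3 (2*y) ^ 2 + theta2 (2*y) ^ 2) ^ 2 := by rw [← h3]; ring
  have e4 : theta4 y ^ 4 = (theta3 (2*y) ^ 2 - theta2 (2*y) ^ 2) ^ 2 := by rw [← h4]; ring
  rw [e2, e3, e4]; ring

lemma delta8_le {y : ℝ} (hy : 0 < y) : Delta8 y ≤ theta3 y ^ 8 / 64 := by
  have j := jacobi_identity hy
  have h : theta3 y ^ 8 = (theta2 y ^ 4 + theta4 y ^ 4) ^ 2 := by rw [j]; ring
  rw [Delta8, h]
  nlinarith [sq_nonneg (theta2 y ^ 4 - theta4 y ^ 4)]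

lemma delta8_one : Delta8 1 = theta3 1 ^ 8 / 64 := by
  have h41 : theta4 1 = theta2 1 := by
    rw [theta4_eq one_pos]; norm_num
  have j := jacobi_identity one_pos
  rw [h41] at j
  have h : theta3 1 ^ 8 = (2 * theta2 1 ^ 4) ^ 2 := by
    rw [show (2:ℝ) * theta2 1 ^ 4 = theta2 1 ^ 4 + theta2 1 ^ 4 by ring, j]; ring
  rw [Delta8, h, h41]
  ring

/-- Proposition 3.1, functional form for extremal odd unimodular lattices: for
9 ≤ n ≤ 31 and Θ(y) = θ₃(y)^n − 2n θ₃(y)^{n−8} Δ₈(y), one has Θ(y) > 0 for all y > 0,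
θ₃(y)^n / Θ(y) ≤ 32/(32 − n) for all y > 0, with equality at y = 1.  (For
n = 12, 14, 15, 23 this gives the secrecy gains 8/5, 16/9, 32/17, 32/9 of
D₁₂⁺, (E₇²)⁺, A₁₅⁺, O₂₃, each achieved at τ = i.) -/
theorem secrecy_gain_extremal_odd (n : ℕ) (hn9 : 9 ≤ n) (hn31 : n ≤ 31) (Θ : ℝ → ℝ)
    (hΘ : ∀ y : ℝ, 0 < y →
      Θ y = theta3 y ^ n - 2 * (n : ℝ) * theta3 y ^ (n - 8) * Delta8 y) :
    (∀ y : ℝ, 0 < y → 0 < Θ y) ∧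
    (∀ y : ℝ, 0 < y → theta3 y ^ n / Θ y ≤ 32 / (32 - (n : ℝ))) ∧
    theta3 1 ^ n / Θ 1 = 32 / (32 - (n : ℝ)) := by
  have hn9' : (9:ℝ) ≤ n := by exact_mod_cast hn9
  have hn31' : (n:ℝ) ≤ 31 := by exact_mod_cast hn31
  have h32 : (0:ℝ) < 32 - (n:ℝ) := by linarith
  -- key estimate
  have hkey : ∀ y : ℝ, 0 < y →
      2 * (n : ℝ) * theta3 y ^ (n - 8) * Delta8 y ≤ (n : ℝ) / 32 * theta3 y ^ n := by
    intro y hy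
    have ht := theta3_pos hy
    have hte : theta3 y ^ (n - 8) * theta3 y ^ 8 = theta3 y ^ n := by
      rw [← pow_add, Nat.sub_add_cancel (by omega : 8 ≤ n)]
    have hΔ := delta8_le hy
    calc 2 * (n : ℝ) * theta3 y ^ (n - 8) * Delta8 y
        ≤ 2 * (n : ℝ) * theta3 y ^ (n - 8) * (theta3 y ^ 8 / 64) := by
          refine mul_le_mul_of_nonneg_left hΔ ?_
          positivity
      _ = (n : ℝ) / 32 * (theta3 y ^ (n - 8) * theta3 y ^ 8) := by ring
      _ = (n : ℝ) / 32 * theta3 y ^ n := by rw [hte]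
  have hpos : ∀ y : ℝ, 0 < y → 0 < Θ y := by
    intro y hy
    have ht := theta3_pos hy
    have htn : 0 < theta3 y ^ n := pow_pos ht n
    have hk := hkey y hy
    have h1 : (n : ℝ) / 32 * theta3 y ^ n ≤ 31 / 32 * theta3 y ^ n := by
      apply mul_le_mul_of_nonneg_right _ htn.le
      linarith
    rw [hΘ y hy]
    linarith
  refine ⟨hpos, ?_, ?_⟩
  · intro y hy
    have hΘpos := hpos y hy
    rw [div_le_div_iff₀ hΘpos h32, hΘ y hy]
    have hk := hkey y hy
    nlinarith [pow_pos (theta3_pos hy) n]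
  · have ht := theta3_pos one_pos
    have htn : (0:ℝ) < theta3 1 ^ n := pow_pos ht n
    have hte : theta3 1 ^ (n - 8) * theta3 1 ^ 8 = theta3 1 ^ n := by
      rw [← pow_add, Nat.sub_add_cancel (by omega : 8 ≤ n)]
    have hΘ1 : Θ 1 = (32 - (n:ℝ)) / 32 * theta3 1 ^ n := by
      rw [hΘ 1 one_pos, delta8_one]
      linear_combination (-(n:ℝ) / 32) * hte
    rw [hΘ1]
    rw [div_eq_div_iff (by positivity) h32.ne']
    ring
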